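/- arXiv:2406.09351 — 4 statements merged into one kernel-verified Lean document; each statement's English description precedes it below -/
import Mathlib

section
/- Two connected finite graphs G and H are CR-similar (the sets {C_G(x) : x ∈ V(G)} and {C_H(y) : y ∈ V(H)} of full color-refinement color sequences are equal) if and only if these sets have nonempty intersection, i.e., some vertex of G and some vertex of H receive the same color sequence. -/
/-- The type of colors at round `r` of color refinement. -/
def CType : ℕ → Type
  | 0 => Unit
  | r + 1 => Multiset (CType r)

/-- The color of vertex `x` after `r` rounds of color refinement on `G`. -/
noncomputable def crColor {V : Type*} [Fintype V] (G : SimpleGraph V) :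
    (r : ℕ) → V → CType r
  | 0, _ => ()
  | r + 1, x => ((G.neighborSet x).toFinite.toFinset).val.map (crColor G r)

/-- The full color-refinement color sequence of a vertex. -/
noncomputable def crSeq {V : Type*} [Fintype V] (G : SimpleGraph V) (x : V) :
    (r : ℕ) → CType r :=
  fun r => crColor G r x

/-- The set of full color sequences arising at vertices of `G`. -/
noncomputable def crSet {V : Type*} [Fintype V] (G : SimpleGraph V) :
    Set ((r : ℕ) → CType r) :=
  Set.range (crSeq G)

/-!
Color sequences pass along edges: if `x` in `G` and `y` in `H` have the same color sequence,
then every neighbour of `x` has the color sequence of some neighbour of `y`. At each round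
`s` the round-`s + 1` colors of `x` and `y` give such a neighbour agreeing up to round `s`;
since `y` has finitely many neighbours, one of them works for infinitely many rounds, hence
for all of them. Following walks in a connected `G`, a single shared color sequence therefore
gives `crSet G ⊆ crSet H`.
-/

def CType.trunc : (s : ℕ) → CType (s + 1) → CType s
  | 0, _ => ()
  | s + 1, m => (show Multiset (CType (s + 1)) from m).map (CType.trunc s)

theorem Finite.exists_forall_of_antitone {α : Type*} [Finite α] {P : ℕ → α → Prop}
    (hP : ∀ a, Antitone (P · a)) (h : ∀ s, ∃ a, P s a) : ∃ a, ∀ s, P s a := by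
  choose f hf using h
  obtain ⟨a, ha⟩ := Finite.exists_infinite_fiber f
  have hinf : {s | f s = a}.Infinite := Set.infinite_coe_iff.mp ha
  refine ⟨a, fun s => ?_⟩
  obtain ⟨t, hta, hst⟩ := hinf.exists_gt s
  exact hP a hst.le (hta ▸ hf t)

section ColorRefinement

variable {VG VH : Type*} [Fintype VG] [Fintype VH] {G : SimpleGraph VG} {H : SimpleGraph VH}

lemma crColor_succ (r : ℕ) (x : VG) :
    crColor G (r + 1) x = (G.neighborSet x).toFinite.toFinset.val.map (crColor G r) := rfl

lemma CType.trunc_crColor :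
    ∀ (s : ℕ) (x : VG), CType.trunc s (crColor G (s + 1) x) = crColor G s x
  | 0, _ => rfl
  | s + 1, x => by
      rw [crColor_succ (s + 1)]
      show (Multiset.map (crColor G (s + 1)) _).map (CType.trunc s) = _
      rw [Multiset.map_map, crColor_succ]
      exact Multiset.map_congr rfl fun y _ => CType.trunc_crColor s y

lemma antitone_crColor_eq (x : VG) (y : VH) :
    Antitone fun s => crColor G s x = crColor H s y :=
  antitone_nat_of_succ_le fun s h => by
    simpa only [CType.trunc_crColor] using congrArg (CType.trunc s) h

lemma exists_adj_crColor_eq {s : ℕ} {x x' : VG} {y : VH}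
    (h : crColor G (s + 1) x = crColor H (s + 1) y) (hx' : G.Adj x x') :
    ∃ y' : H.neighborSet y, crColor G s x' = crColor H s y' := by
  have hmem : crColor G s x' ∈ (H.neighborSet y).toFinite.toFinset.val.map (crColor H s) := by
    rw [← crColor_succ, ← h, crColor_succ]
    exact Multiset.mem_map_of_mem _ (by simpa using hx')
  obtain ⟨y', hy', hcol⟩ := Multiset.mem_map.mp hmem
  exact ⟨⟨y', by simpa using hy'⟩, hcol.symm⟩

lemma exists_adj_crSeq_eq {x x' : VG} {y : VH} (h : crSeq G x = crSeq H y) (hx' : G.Adj x x') :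
    ∃ y', H.Adj y y' ∧ crSeq G x' = crSeq H y' := by
  obtain ⟨⟨y', hy'⟩, hcol⟩ := Finite.exists_forall_of_antitone
    (fun y' : H.neighborSet y => antitone_crColor_eq x' (y' : VH))
    fun s => exists_adj_crColor_eq (congrFun h (s + 1)) hx'
  exact ⟨y', hy', funext hcol⟩

lemma SimpleGraph.Walk.exists_crSeq_eq {x x' : VG} (p : G.Walk x x') {y : VH}
    (h : crSeq G x = crSeq H y) : ∃ y', crSeq G x' = crSeq H y' := by
  induction p generalizing y with
  | nil => exact ⟨y, h⟩
  | cons hadj _ ih =>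
    obtain ⟨y', -, h'⟩ := exists_adj_crSeq_eq h hadj
    exact ih h'

lemma crSet_subset_of_crSeq_eq (hG : G.Connected) {x : VG} {y : VH}
    (h : crSeq G x = crSeq H y) : crSet G ⊆ crSet H := by
  rintro _ ⟨x', rfl⟩
  obtain ⟨p⟩ := hG x x'
  obtain ⟨y', h'⟩ := p.exists_crSeq_eq h
  exact ⟨y', h'.symm⟩

end ColorRefinement

/-- Two connected finite graphs are CR-similar iff their sets of color sequences
intersect. -/
theorem stmt_7 {VG VH : Type*} [Fintype VG] [Fintype VH]
    (G : SimpleGraph VG) (H : SimpleGraph VH)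
    (hG : G.Connected) (hH : H.Connected) :
    crSet G = crSet H ↔ (crSet G ∩ crSet H).Nonempty := by
  constructor
  · intro h
    obtain ⟨x⟩ := hG.nonempty
    exact ⟨crSeq G x, ⟨x, rfl⟩, h ▸ ⟨x, rfl⟩⟩
  · rintro ⟨_, ⟨x, rfl⟩, y, hy⟩
    exact (crSet_subset_of_crSeq_eq hG hy.symm).antisymm (crSet_subset_of_crSeq_eq hH hy)
end

section
/- If G is connected, H is the disjoint union H' + H'' of two nonempty graphs, and G is CR-similar to H, then G is CR-similar to H' and to H''. -/
def CType.proj : (r : ℕ) → CType (r + 1) → CType r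
  | 0, _ => ()
  | r + 1, m => Multiset.map (CType.proj r) m

section

open SimpleGraph

variable {V W : Type*} [Fintype V] [Fintype W] {G : SimpleGraph V} {H : SimpleGraph W}

lemma proj_crColor_succ (r : ℕ) (x : V) : CType.proj r (crColor G (r + 1) x) = crColor G r x := by
  induction r generalizing x with
  | zero => rfl
  | succ r ih =>
    change Multiset.map _ (Multiset.map _ _) = Multiset.map _ _
    rw [Multiset.map_map]
    exact Multiset.map_congr rfl fun y _ => ih y

lemma crColor_eq_of_le {x : V} {u : W} {r r' : ℕ} (hr : r ≤ r')
    (h : crColor G r' x = crColor H r' u) : crColor G r x = crColor H r u := by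
  induction hr with
  | refl => exact h
  | step _ ih =>
    apply ih
    rw [← proj_crColor_succ, h, proj_crColor_succ]

lemma exists_adj_crSeq_eq_s10 {x y : V} {u : W} (hxy : G.Adj x y) (hxu : crSeq G x = crSeq H u) :
    ∃ v, H.Adj u v ∧ crSeq G y = crSeq H v := by
  have hround : ∀ r, ∃ v, H.Adj u v ∧ crColor H r v = crColor G r y := by
    intro r
    have hmem : crColor G r y ∈ (G.neighborSet x).toFinite.toFinset.val.map (crColor G r) :=
      Multiset.mem_map_of_mem _ ((Set.Finite.mem_toFinset _).mpr hxy)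
    have hcol : crColor G (r + 1) x = crColor H (r + 1) u := congrFun hxu (r + 1)
    unfold crColor at hcol
    rw [hcol] at hmem
    obtain ⟨v, hv, hvy⟩ := Multiset.mem_map.mp hmem
    exact ⟨v, (Set.Finite.mem_toFinset _).mp hv, hvy⟩
  choose f hadj hcol using hround
  obtain ⟨v, hv⟩ := Finite.exists_infinite_fiber f
  have hfib : {r | f r = v}.Infinite := Set.infinite_coe_iff.mp hv
  refine ⟨v, ?_, funext fun r => ?_⟩
  · obtain ⟨r, hr⟩ := hfib.nonempty
    exact hr ▸ hadj r
  · obtain ⟨r', hr', hrr'⟩ := hfib.exists_gt r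
    exact crColor_eq_of_le hrr'.le (hr' ▸ hcol r').symm

lemma crSet_subset_of_connected (hG : G.Connected) (hGH : (crSet G ∩ crSet H).Nonempty) :
    crSet G ⊆ crSet H := by
  obtain ⟨_, ⟨x₀, rfl⟩, hx₀⟩ := hGH
  rintro _ ⟨x, rfl⟩
  induction (reachable_iff_reflTransGen x₀ x).mp (hG.preconnected x₀ x) with
  | refl => exact hx₀
  | tail _ hyz ih =>
    obtain ⟨u, hu⟩ := ih
    obtain ⟨v, -, hv⟩ := exists_adj_crSeq_eq_s10 hyz hu.symm
    exact ⟨v, hv.symm⟩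

lemma crSet_eq_of_connected [Nonempty W] (hG : G.Connected) (hHG : crSet H ⊆ crSet G) :
    crSet G = crSet H :=
  have ⟨w⟩ := ‹Nonempty W›
  (crSet_subset_of_connected hG ⟨crSeq H w, hHG ⟨w, rfl⟩, w, rfl⟩).antisymm hHG

lemma crColor_embedding_apply (f : G ↪g H) (hf : ∀ x w, H.Adj (f x) w → w ∈ Set.range f)
    (r : ℕ) (x : V) : crColor H r (f x) = crColor G r x := by
  induction r generalizing x with
  | zero => rfl
  | succ r ih =>
    have hnbr : (H.neighborSet (f x)).toFinite.toFinset =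
        (G.neighborSet x).toFinite.toFinset.map f.toEmbedding := by
      ext w
      simp only [Set.Finite.mem_toFinset, mem_neighborSet, Finset.mem_map]
      constructor
      · intro hw
        obtain ⟨y, rfl⟩ := hf x w hw
        exact ⟨y, f.map_adj_iff.mp hw, rfl⟩
      · rintro ⟨y, hy, rfl⟩
        exact f.map_adj_iff.mpr hy
    change Multiset.map _ _ = Multiset.map _ _
    rw [hnbr, Finset.map_val, Multiset.map_map]
    exact Multiset.map_congr rfl fun y _ => ih y

lemma crSeq_sum {V₁ V₂ : Type*} [Fintype V₁] [Fintype V₂]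
    (H₁ : SimpleGraph V₁) (H₂ : SimpleGraph V₂) :
    crSeq (H₁ ⊕g H₂) = Sum.elim (crSeq H₁) (crSeq H₂) := by
  funext z r
  cases z with
  | inl a =>
    refine crColor_embedding_apply Embedding.sumInl (fun _ w _ => ?_) r a
    cases w <;> simp_all
  | inr b =>
    refine crColor_embedding_apply Embedding.sumInr (fun _ w _ => ?_) r b
    cases w <;> simp_all

lemma crSet_sum {V₁ V₂ : Type*} [Fintype V₁] [Fintype V₂]
    (H₁ : SimpleGraph V₁) (H₂ : SimpleGraph V₂) :
    crSet (H₁ ⊕g H₂) = crSet H₁ ∪ crSet H₂ := by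
  rw [crSet, crSeq_sum, Set.Sum.elim_range, crSet, crSet]

end

/-- If `G` is connected and CR-similar to a disjoint union `H' + H''` of two
nonempty graphs, then `G` is CR-similar to `H'` and to `H''`. -/
theorem stmt_10 {VG V₁ V₂ : Type*} [Fintype VG] [Fintype V₁] [Fintype V₂]
    [Nonempty V₁] [Nonempty V₂]
    (G : SimpleGraph VG) (H' : SimpleGraph V₁) (H'' : SimpleGraph V₂)
    (hG : G.Connected) (h : crSet G = crSet (H' ⊕g H'')) :
    crSet G = crSet H' ∧ crSet G = crSet H'' := by
  rw [crSet_sum] at h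
  exact ⟨crSet_eq_of_connected hG (h ▸ Set.subset_union_left),
    crSet_eq_of_connected hG (h ▸ Set.subset_union_right)⟩
end

section
/- If A' is a proper subgraph of a connected finite graph A (on the same or fewer vertices, missing at least one edge or vertex of A), then A is not CR-similar to A'. -/
attribute [local instance] Classical.propDecidable

/-- A partial order on colors: `c` is dominated by `d`. -/
def ctLE : (r : ℕ) → CType r → CType r → Prop
  | 0, _, _ => True
  | r + 1, M, N => ∃ N₀ : Multiset (CType r), N₀ ≤ (N : Multiset (CType r)) ∧
      Multiset.Rel (ctLE r) (M : Multiset (CType r)) N₀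

lemma rel_self {α : Type*} (S : α → α → Prop) (s : Multiset α) (h : ∀ a ∈ s, S a a) :
    Multiset.Rel S s s := by
  induction s using Multiset.induction with
  | empty => simp
  | cons a s ih =>
    exact Multiset.Rel.cons (h a (Multiset.mem_cons_self a s))
      (ih fun b hb => h b (Multiset.mem_cons_of_mem hb))

lemma ctLE_refl : ∀ (r : ℕ) (c : CType r), ctLE r c c
  | 0, _ => trivial
  | r + 1, c => ⟨c, le_refl _, rel_self _ _ fun a _ => ctLE_refl r a⟩

lemma rel_sub {α β : Type*} (R : α → β → Prop) {N₀ N : Multiset α} {P : Multiset β}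
    (h : N₀ ≤ N) (hr : Multiset.Rel R N P) : ∃ P₀, P₀ ≤ P ∧ Multiset.Rel R N₀ P₀ := by
  obtain ⟨D, rfl⟩ := Multiset.le_iff_exists_add.mp h
  rw [Multiset.rel_add_left] at hr
  obtain ⟨P₀, P₁, h₀, _, rfl⟩ := hr
  exact ⟨P₀, Multiset.le_add_right _ _, h₀⟩

lemma rel_trans' {α : Type*} (R : α → α → Prop) (ht : ∀ {a b c}, R a b → R b c → R a c) :
    ∀ {M N P : Multiset α}, Multiset.Rel R M N → Multiset.Rel R N P → Multiset.Rel R M P := by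
  intro M
  induction M using Multiset.induction with
  | empty =>
    intro N P h1 h2
    rw [Multiset.rel_zero_left] at h1; subst h1
    rw [Multiset.rel_zero_left] at h2; subst h2
    simp
  | cons a M ih =>
    intro N P h1 h2
    obtain ⟨b, N', hab, hMN', rfl⟩ := Multiset.rel_cons_left.mp h1
    obtain ⟨c, P', hbc, hN'P', rfl⟩ := Multiset.rel_cons_left.mp h2
    exact Multiset.Rel.cons (ht hab hbc) (ih hMN' hN'P')

lemma ctLE_trans : ∀ (r : ℕ) {a b c : CType r}, ctLE r a b → ctLE r b c → ctLE r a c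
  | 0, _, _, _, _, _ => trivial
  | r + 1, a, b, c, ⟨B₀, hB, hab⟩, ⟨C₀, hC, hbc⟩ => by
    obtain ⟨C₁, hC₁, h₁⟩ := rel_sub _ hB hbc
    exact ⟨C₁, le_trans hC₁ hC, rel_trans' (ctLE r) (fun h1 h2 => ctLE_trans r h1 h2) hab h₁⟩

lemma exists_max {α : Type*} (R : α → α → Prop) (ht : ∀ {a b c}, R a b → R b c → R a c)
    (s : Multiset α) (hs : s ≠ 0) : ∃ m ∈ s, ∀ x ∈ s, R m x → R x m := by
  induction s using Multiset.induction with
  | empty => exact absurd rfl hs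
  | cons a s ih =>
    rcases eq_or_ne s 0 with rfl | hs0
    · refine ⟨a, Multiset.mem_cons_self a 0, ?_⟩
      intro x hx hR
      rcases Multiset.mem_cons.mp hx with rfl | hx
      · exact hR
      · simp at hx
    · obtain ⟨m, hm, hmax⟩ := ih hs0
      by_cases hma : R m a
      · refine ⟨a, Multiset.mem_cons_self a s, ?_⟩
        intro x hx hax
        rcases Multiset.mem_cons.mp hx with rfl | hx
        · exact hax
        · exact ht (hmax x hx (ht hma hax)) hma
      · refine ⟨m, Multiset.mem_cons_of_mem hm, ?_⟩
        intro x hx hmx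
        rcases Multiset.mem_cons.mp hx with rfl | hx
        · exact absurd hmx hma
        · exact hmax x hx hmx

lemma rel_antisymm {α : Type*} (R : α → α → Prop) (ht : ∀ {a b c}, R a b → R b c → R a c)
    (ha : ∀ {a b}, R a b → R b a → a = b) :
    ∀ (n : ℕ) (M N : Multiset α), Multiset.card M = n →
      Multiset.Rel R M N → Multiset.Rel R N M → M = N := by
  intro n
  induction n with
  | zero =>
    intro M N hM h1 _
    rw [Multiset.card_eq_zero] at hM; subst hM
    exact (Multiset.rel_zero_left.mp h1).symm
  | succ n ih =>
    intro M N hM h1 h2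
    have hMne : M ≠ 0 := by
      intro h; subst h; simp at hM
    have hMN : M + N ≠ 0 := fun h =>
      hMne (Multiset.le_zero.mp (h ▸ Multiset.le_add_right M N))
    obtain ⟨m, hm, hmax0⟩ := exists_max R ht (M + N) hMN
    have hmax : ∀ x, x ∈ M ∨ x ∈ N → R m x → R x m := fun x hx =>
      hmax0 x (Multiset.mem_add.mpr hx)
    have key : ∀ (P Q : Multiset α), Multiset.card P = n + 1 → m ∈ P →
        (∀ x, x ∈ P ∨ x ∈ Q → R m x → R x m) →
        Multiset.Rel R P Q → Multiset.Rel R Q P → P = Q := by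
      intro P Q hcard hmP hmx hPQ hQP
      obtain ⟨P', rfl⟩ := Multiset.exists_cons_of_mem hmP
      obtain ⟨b, Q', hmb, hP'Q', rfl⟩ := Multiset.rel_cons_left.mp hPQ
      have hb : m = b := ha hmb (hmx b (Or.inr (Multiset.mem_cons_self _ _)) hmb)
      subst hb
      obtain ⟨c, P₁, hbc, hQ'P₁, hP⟩ := Multiset.rel_cons_left.mp hQP
      have hc : m = c := by
        refine ha hbc (hmx c (Or.inl ?_) hbc)
        rw [hP]; exact Multiset.mem_cons_self _ _
      subst hc
      have hP₁ : P' = P₁ := by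
        rwa [Multiset.cons_inj_right] at hP
      rw [ih _ Q' (show Multiset.card P' = n by simpa using hcard) hP'Q'
        (by rw [hP₁]; exact hQ'P₁)]
    rcases Multiset.mem_add.mp hm with hmM | hmN
    · exact key M N hM hmM hmax h1 h2
    · have hcN : Multiset.card N = n + 1 := by
        rw [← Multiset.card_eq_card_of_rel h1]; exact hM
      exact (key N M hcN hmN (fun x hx => hmax x hx.symm) h2 h1).symm

lemma ctLE_antisymm : ∀ (r : ℕ) {a b : CType r}, ctLE r a b → ctLE r b a → a = b := by
  intro r
  induction r with
  | zero => intro a b _ _; exact @Subsingleton.elim Unit _ a b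
  | succ r ih =>
    rintro a b ⟨B₀, hB, hab⟩ ⟨A₀, hA, hba⟩
    have c1 : Multiset.card a = Multiset.card B₀ := Multiset.card_eq_card_of_rel hab
    have c2 : Multiset.card b = Multiset.card A₀ := Multiset.card_eq_card_of_rel hba
    have d1 : Multiset.card B₀ ≤ Multiset.card b := Multiset.card_le_card hB
    have d2 : Multiset.card A₀ ≤ Multiset.card a := Multiset.card_le_card hA
    have hB' : B₀ = b := Multiset.eq_of_le_of_card_le hB (by omega)
    have hA' : A₀ = a := Multiset.eq_of_le_of_card_le hA (by omega)
    rw [hB'] at hab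
    rw [hA'] at hba
    exact rel_antisymm (ctLE r) (ctLE_trans r) (fun h1 h2 => ih h1 h2)
      (Multiset.card a) a b rfl hab hba

lemma map_eq_pointwise {ι α : Type*} (R : α → α → Prop) (ht : ∀ {a b c}, R a b → R b c → R a c)
    (ha : ∀ {a b}, R a b → R b a → a = b) :
    ∀ (n : ℕ) (s : Multiset ι) (f g : ι → α), Multiset.card s = n →
      (∀ i ∈ s, R (g i) (f i)) → s.map f = s.map g → ∀ i ∈ s, f i = g i := by
  intro n
  induction n using Nat.strong_induction_on with
  | _ n ihn =>
  intro s f g hn hle heq i hi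
  classical
  have hs0 : s ≠ 0 := by
    intro h; subst h; simp at hi
  have hT : s.map f ≠ 0 := by
    simpa [Multiset.map_eq_zero] using hs0
  obtain ⟨m, hmT, hmax⟩ := exists_max R ht (s.map f) hT
  set Af := s.filter (fun i => f i = m) with hAf
  set Bf := s.filter (fun i => g i = m) with hBf
  have hq : ∀ j ∈ Bf, f j = m := by
    intro j hjb
    have hjs : j ∈ s := (Multiset.mem_filter.mp hjb).1
    have hgj : g j = m := (Multiset.mem_filter.mp hjb).2
    have hmf : R m (f j) := hgj ▸ hle j hjs
    exact ha (hmax (f j) (Multiset.mem_map_of_mem f hjs) hmf) hmf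
  have hBA : Bf ≤ Af := by
    have hBfe : Bf.filter (fun j => f j = m) = Bf := Multiset.filter_eq_self.mpr hq
    calc Bf = Bf.filter (fun j => f j = m) := hBfe.symm
      _ ≤ s.filter (fun j => f j = m) := Multiset.filter_le_filter _ (Multiset.filter_le _ s)
      _ = Af := rfl
  have hcAf : Multiset.card Af = Multiset.count m (s.map f) := by
    rw [Multiset.count_map]
    congr 1
    exact Multiset.filter_congr (fun j _ => by constructor <;> exact fun h => h.symm)
  have hcBf : Multiset.card Bf = Multiset.count m (s.map g) := by
    rw [Multiset.count_map]
    congr 1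
    exact Multiset.filter_congr (fun j _ => by constructor <;> exact fun h => h.symm)
  have hcard : Multiset.card Bf = Multiset.card Af := by
    rw [hcAf, hcBf, heq]
  have hABeq : Bf = Af := Multiset.eq_of_le_of_card_le hBA (le_of_eq hcard.symm)
  by_cases hfi : f i = m
  · have hiA : i ∈ Af := Multiset.mem_filter.mpr ⟨hi, hfi⟩
    rw [← hABeq] at hiA
    have := (Multiset.mem_filter.mp hiA).2
    rw [hfi, this]
  · set A' := s.filter (fun j => ¬ f j = m) with hA'
    set B' := s.filter (fun j => ¬ g j = m) with hB'
    have hs1 : Af + A' = s := Multiset.filter_add_not _ s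
    have hs2 : Bf + B' = s := Multiset.filter_add_not _ s
    have hA'B' : A' = B' := by
      have : Af + A' = Af + B' := by rw [hs1, ← hABeq, hs2]
      exact add_left_cancel this
    have hmapf : Af.map f = Multiset.replicate (Multiset.card Af) m := by
      rw [show Af.map f = Af.map (fun _ => m) from
        Multiset.map_congr rfl (fun j hj => (Multiset.mem_filter.mp hj).2)]
      exact Multiset.map_const' _ _
    have hmapg : Bf.map g = Multiset.replicate (Multiset.card Bf) m := by
      rw [show Bf.map g = Bf.map (fun _ => m) from
        Multiset.map_congr rfl (fun j hj => (Multiset.mem_filter.mp hj).2)]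
      exact Multiset.map_const' _ _
    have heq' : A'.map f = A'.map g := by
      have h1 : Af.map f + A'.map f = Bf.map g + B'.map g := by
        rw [← Multiset.map_add, ← Multiset.map_add, hs1, hs2, heq]
      rw [hmapf, hmapg, hcard, hA'B'] at h1
      rw [hA'B']
      exact add_left_cancel h1
    have hiA' : i ∈ A' := Multiset.mem_filter.mpr ⟨hi, hfi⟩
    have hcA' : Multiset.card A' < n := by
      have h1 : Multiset.card Af + Multiset.card A' = n := by
        rw [← Multiset.card_add, hs1, hn]
      have h2 : 0 < Multiset.card Af := by
        obtain ⟨j, hjs, hjm⟩ := Multiset.mem_map.mp hmT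
        exact Multiset.card_pos.mpr (fun h => by
          have : j ∈ Af := Multiset.mem_filter.mpr ⟨hjs, hjm⟩
          simp [h] at this)
      omega
    exact ihn (Multiset.card A') hcA' A' f g rfl
      (fun j hj => hle j (Multiset.mem_filter.mp hj).1) heq' i hiA'

lemma crColor_succ_s11 {V : Type*} [Fintype V] (G : SimpleGraph V) (r : ℕ) (x : V) :
    crColor G (r + 1) x = ((G.neighborSet x).toFinite.toFinset).val.map (crColor G r) := rfl

section Graph

variable {V : Type*} [Fintype V] (A : SimpleGraph V) (A' : A.Subgraph)

lemma nbr_le (x : A'.verts) :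
    ((A'.coe.neighborSet x).toFinite.toFinset).val.map Subtype.val ≤
      ((A.neighborSet x.val).toFinite.toFinset).val := by
  apply (Multiset.le_iff_subset (Multiset.Nodup.map Subtype.val_injective
    ((A'.coe.neighborSet x).toFinite.toFinset).nodup)).mpr
  intro v hv
  obtain ⟨u, hu, rfl⟩ := Multiset.mem_map.mp hv
  have hu' : A'.coe.Adj x u := by
    have := (Set.Finite.mem_toFinset _).mp (Finset.mem_val.mp hu)
    exact this
  have : A.Adj x.val u.val := A'.adj_sub hu'
  rw [Finset.mem_val, Set.Finite.mem_toFinset]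
  exact this

lemma sub_ctLE : ∀ (r : ℕ) (x : A'.verts), ctLE r (crColor A'.coe r x) (crColor A r x.val) := by
  intro r
  induction r with
  | zero => intro x; trivial
  | succ r ih =>
    intro x
    refine ⟨((A'.coe.neighborSet x).toFinite.toFinset).val.map (fun u => crColor A r u.val),
      ?_, ?_⟩
    · rw [crColor_succ_s11]
      have h1 := nbr_le A A' x
      have h2 := Multiset.map_le_map (f := crColor A r) h1
      rwa [Multiset.map_map] at h2
    · rw [crColor_succ_s11]
      rw [Multiset.rel_map]
      exact rel_self _ _ (fun u _ => ih u)

lemma step_eq (x : A'.verts)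
    (hx : ∀ r, crColor A r x.val = crColor A'.coe r x) :
    ((A'.coe.neighborSet x).toFinite.toFinset).val.map Subtype.val
        = ((A.neighborSet x.val).toFinite.toFinset).val ∧
      ∀ u ∈ ((A'.coe.neighborSet x).toFinite.toFinset).val,
        ∀ r, crColor A r u.val = crColor A'.coe r u := by
  have hle := nbr_le A A' x
  have hcard : Multiset.card ((A.neighborSet x.val).toFinite.toFinset).val
      = Multiset.card ((A'.coe.neighborSet x).toFinite.toFinset).val := by
    have h1 := hx 1
    rw [crColor_succ_s11, crColor_succ_s11] at h1
    have h2 := congrArg Multiset.card h1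
    simpa using h2
  have hmeq : ((A'.coe.neighborSet x).toFinite.toFinset).val.map Subtype.val
      = ((A.neighborSet x.val).toFinite.toFinset).val :=
    Multiset.eq_of_le_of_card_le hle (by simpa using le_of_eq hcard)
  refine ⟨hmeq, ?_⟩
  intro u hu r
  have heqr := hx (r + 1)
  rw [crColor_succ_s11, crColor_succ_s11, ← hmeq, Multiset.map_map] at heqr
  exact map_eq_pointwise (ctLE r) (fun h1 h2 => ctLE_trans r h1 h2)
    (fun h1 h2 => ctLE_antisymm r h1 h2) _ _ _ _ rfl
    (fun j _ => sub_ctLE A A' r j) heqr u hu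

end Graph

/-- A connected finite graph is not CR-similar to any proper subgraph of itself
(a subgraph missing at least one vertex or edge of `A`). -/
theorem stmt_11 {V : Type*} [Fintype V] (A : SimpleGraph V) (hA : A.Connected)
    (A' : A.Subgraph) (hprop : A' ≠ ⊤) :
    crSet A ≠ crSet A'.coe := by
  intro hset
  have hVne : Nonempty V := hA.nonempty
  obtain ⟨v0⟩ := hVne
  have h0 : crSeq A v0 ∈ crSet A'.coe := hset ▸ Set.mem_range_self v0
  obtain ⟨y0, -⟩ := h0
  have hg : ∀ x : A'.verts, ∃ y : A'.verts, crSeq A'.coe y = crSeq A x.val := fun x =>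
    (show crSeq A x.val ∈ crSet A'.coe from hset ▸ Set.mem_range_self _)
  choose g hgspec using hg
  -- monotonicity along iterates of g
  have hstep : ∀ (x : A'.verts) (r : ℕ),
      ctLE r (crSeq A'.coe x r) (crSeq A'.coe (g x) r) := by
    intro x r
    rw [hgspec x]
    exact sub_ctLE A A' r x
  have hiter : ∀ (n : ℕ) (x : A'.verts) (r : ℕ),
      ctLE r (crSeq A'.coe x r) (crSeq A'.coe (g^[n] x) r) := by
    intro n
    induction n with
    | zero => intro x r; exact ctLE_refl r _
    | succ n ih =>
      intro x r
      rw [Function.iterate_succ_apply]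
      exact ctLE_trans r (hstep x r) (ih (g x) r)
  -- find a periodic point of g
  obtain ⟨x, n, hn, hxn⟩ : ∃ (x : A'.verts) (n : ℕ), 0 < n ∧ g^[n] x = x := by
    obtain ⟨i, j, hij, hfeq⟩ := Fintype.exists_ne_map_eq_of_card_lt
      (fun n : Fin (Fintype.card A'.verts + 1) => g^[(n : ℕ)] y0) (by simp)
    rcases lt_or_gt_of_ne (fun h => hij (Fin.ext h)) with h | h
    · refine ⟨g^[(i : ℕ)] y0, (j : ℕ) - (i : ℕ), by omega, ?_⟩
      rw [← Function.iterate_add_apply, Nat.sub_add_cancel (le_of_lt h)]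
      exact hfeq.symm
    · refine ⟨g^[(j : ℕ)] y0, (i : ℕ) - (j : ℕ), by omega, ?_⟩
      rw [← Function.iterate_add_apply, Nat.sub_add_cancel (le_of_lt h)]
      exact hfeq
  -- at the periodic point the two color sequences agree
  have hxeq : ∀ r, crColor A r x.val = crColor A'.coe r x := by
    intro r
    refine ctLE_antisymm r ?_ (sub_ctLE A A' r x)
    have h1 : crColor A r x.val = crSeq A'.coe (g x) r := by
      rw [hgspec x]; rfl
    have h2 := hiter (n - 1) (g x) r
    have h3 : g^[n - 1] (g x) = x := by
      rw [← Function.iterate_succ_apply]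
      have hn' : (n - 1).succ = n := by omega
      rw [hn']
      exact hxn
    rw [h3] at h2
    rw [h1]
    exact h2
  -- the set of vertices where the two sequences agree
  set S : Set V := {z | ∃ hz : z ∈ A'.verts, ∀ r, crColor A r z = crColor A'.coe r ⟨z, hz⟩}
    with hS
  have hxS : x.val ∈ S := ⟨x.2, fun r => hxeq r⟩
  have hclosed : ∀ z ∈ S, ∀ w, A.Adj z w → w ∈ S := by
    intro z hz w hw
    obtain ⟨hzv, hzeq⟩ := hz
    obtain ⟨hmapeq, hptw⟩ := step_eq A A' ⟨z, hzv⟩ hzeq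
    have hwmem : w ∈ ((A.neighborSet z).toFinite.toFinset).val := by
      rw [Finset.mem_val, Set.Finite.mem_toFinset]
      exact hw
    rw [← hmapeq] at hwmem
    obtain ⟨u, hu, hueq⟩ := Multiset.mem_map.mp hwmem
    subst hueq
    exact ⟨u.2, fun r => by rw [hptw u hu r, Subtype.coe_eta]⟩
  have hwalk : ∀ (a b : V), A.Walk a b → a ∈ S → b ∈ S := by
    intro a b p
    induction p with
    | nil => exact id
    | cons h _ ih => exact fun ha => ih (hclosed _ ha _ h)
  have hall : ∀ v, v ∈ S := fun v =>
    (hA.preconnected x.val v).elim (fun w => hwalk _ _ w hxS)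
  apply hprop
  ext z w
  · simp only [SimpleGraph.Subgraph.verts_top, Set.mem_univ, iff_true]
    exact (hall z).1
  · simp only [SimpleGraph.Subgraph.top_adj]
    constructor
    · exact fun h => A'.adj_sub h
    · intro hzw
      obtain ⟨hzv, hzeq⟩ := hall z
      obtain ⟨hmapeq, -⟩ := step_eq A A' ⟨z, hzv⟩ hzeq
      have hwmem : w ∈ ((A.neighborSet z).toFinite.toFinset).val := by
        rw [Finset.mem_val, Set.Finite.mem_toFinset]
        exact hzw
      rw [← hmapeq] at hwmem
      obtain ⟨u, hu, hueq⟩ := Multiset.mem_map.mp hwmem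
      have hu2 : u ∈ (A'.coe.neighborSet ⟨z, hzv⟩).toFinite.toFinset := hu
      have hadj := (Set.Finite.mem_toFinset (A'.coe.neighborSet ⟨z, hzv⟩).toFinite).mp hu2
      rw [← hueq]
      exact hadj
end

section
/- Let A be a connected finite graph with diameter less than D, A' a proper subgraph of A, and u a vertex of A' maximizing the number of vertices of the depth-D truncated universal cover U^D_{A',u}. Then U^D_{A,u} has strictly more vertices than U^D_{A',w} for every vertex w of A'. -/
/-- `l` is a non-backtracking walk in `G` starting at `x`. -/
def IsNBWalk {V : Type*} (G : SimpleGraph V) (x : V) (l : List V) : Prop :=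
  l ≠ [] ∧ l.head? = some x ∧ l.Chain' G.Adj ∧
    ∀ i : ℕ, (h : i + 2 < l.length) → l[i]'(by omega) ≠ l[i + 2]'h

/-- Vertices of the universal cover of `G` rooted at `x`, truncated at depth `r`:
non-backtracking walks from `x` with at most `r` edges. -/
def TruncCover {V : Type*} (G : SimpleGraph V) (x : V) (r : ℕ) : Type _ :=
  {l : List V // IsNBWalk G x l ∧ l.length ≤ r + 1}

/-!
Pushing walks forward along the inclusion `A' → A` embeds `U^D_{A',u}` into `U^D_{A,u}`, so
by maximality of `u` it suffices to find a point of `U^D_{A,u}` outside the image. Since `A'` is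
proper, it misses a vertex `v` or an edge `ab` of `A`, with `d(u,a) ≤ d(u,b)` say. A shortest path
from `u` to `v`, or a shortest path from `u` to `a` followed by the edge `ab` (which cannot revisit
`b`, as `b` is not closer to `u` than `a`), is a path of length at most `diam A + 1 ≤ D` in `A`
that does not lift to `A'`; being a path, it is non-backtracking.
-/

open SimpleGraph Function

theorem Nat.card_lt_of_injective_of_notMem {α β : Type*} [Finite β] (f : α → β)
    (hf : Injective f) {b : β} (hb : b ∉ Set.range f) : Nat.card α < Nat.card β :=
  (Nat.card_le_card_of_injective f hf).lt_of_ne fun h =>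
    hb (((Nat.bijective_iff_injective_and_card f).mpr ⟨hf, h⟩).2 b)

section

variable {V W : Type*} {G : SimpleGraph V} {H : SimpleGraph W}

theorem IsNBWalk.map (f : G →g H) (hf : Injective f) {x : V} {l : List V}
    (h : IsNBWalk G x l) : IsNBWalk H (f x) (l.map f) := by
  obtain ⟨hne, hhead, hchain, hnb⟩ := h
  refine ⟨by simpa using hne, by simp [hhead], ?_, ?_⟩
  · exact List.isChain_map_of_isChain f (fun _ _ => f.map_adj) hchain
  · intro i hi
    simpa [hf.eq_iff] using hnb i (by simpa using hi)

theorem SimpleGraph.Walk.IsPath.isNBWalk_support {x y : V} {p : G.Walk x y} (hp : p.IsPath) :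
    IsNBWalk G x p.support := by
  refine ⟨p.support_ne_nil, by rw [← p.cons_tail_support]; rfl, p.isChain_adj_support, ?_⟩
  intro i hi he
  have := (hp.support_nodup.getElem_inj_iff (hi := by omega) (hj := hi)).mp he
  omega

theorem SimpleGraph.Walk.dist_lt_of_mem_support {x y a : V} {p : G.Walk x y}
    (hp : p.length = G.dist x y) (ha : a ∈ p.support) (hay : a ≠ y) :
    G.dist x a < G.dist x y := by
  classical
  exact calc G.dist x a ≤ (p.takeUntil a ha).length := dist_le _
    _ < p.length := p.length_takeUntil_lt_length ha hay
    _ = G.dist x y := hp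

namespace TruncCover

instance finite [Finite V] (x : V) (r : ℕ) : Finite (TruncCover G x r) :=
  have : Finite {l : List V // l.length ≤ r + 1} := (List.finite_length_le V (r + 1)).to_subtype
  Finite.of_injective
    (fun t : TruncCover G x r => (⟨t.1, t.2.2⟩ : {l : List V // l.length ≤ r + 1}))
    fun _ _ h => Subtype.ext congr(Subtype.val $h)

def ofPath {x y : V} {r : ℕ} (p : G.Walk x y) (hp : p.IsPath) (hr : p.length ≤ r) :
    TruncCover G x r :=
  ⟨p.support, hp.isNBWalk_support, by simpa using hr⟩

def map (f : G →g H) (hf : Injective f) {x : V} {r : ℕ} (t : TruncCover G x r) :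
    TruncCover H (f x) r :=
  ⟨t.1.map f, t.2.1.map f hf, by simpa using t.2.2⟩

theorem map_injective (f : G →g H) (hf : Injective f) (x : V) (r : ℕ) :
    Injective (map f hf (x := x) (r := r)) :=
  fun _ _ h => Subtype.ext (List.map_injective_iff.mpr hf congr(Subtype.val $h))

end TruncCover

end

namespace SimpleGraph.Subgraph

variable {V : Type*} {G : SimpleGraph V}

theorem exists_notMem_verts_or_not_adj_of_ne_top {H : G.Subgraph} (hH : H ≠ ⊤) :
    (∃ v, v ∉ H.verts) ∨ ∃ a b, G.Adj a b ∧ ¬ H.Adj a b := by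
  by_contra! h
  exact hH (Subgraph.ext (Set.eq_univ_of_forall h.1)
    (funext₂ fun a b => propext ⟨fun hab => hab.adj_sub, h.2 a b⟩))

def LiftsTo (H : G.Subgraph) (l : List V) : Prop :=
  ∃ l' : List H.verts, l'.IsChain H.coe.Adj ∧ l'.map Subtype.val = l

theorem LiftsTo.subset_verts {H : G.Subgraph} {l : List V} (h : H.LiftsTo l) {v : V}
    (hv : v ∈ l) : v ∈ H.verts := by
  obtain ⟨l', -, rfl⟩ := h
  obtain ⟨v', -, rfl⟩ := List.mem_map.mp hv
  exact v'.2

theorem LiftsTo.chain {H : G.Subgraph} {l : List V} (h : H.LiftsTo l) : l.IsChain H.Adj := by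
  obtain ⟨l', hl', rfl⟩ := h
  exact List.isChain_map_of_isChain Subtype.val (fun _ _ h => h) hl'

end SimpleGraph.Subgraph

theorem SimpleGraph.Connected.exists_path_not_liftsTo {V : Type*} [Finite V] {G : SimpleGraph V}
    (hG : G.Connected) {H : G.Subgraph} (hH : H ≠ ⊤) (x : V) :
    ∃ y, ∃ p : G.Walk x y, p.IsPath ∧ p.length ≤ G.diam + 1 ∧ ¬ H.LiftsTo p.support := by
  have : Nonempty V := hG.nonempty
  have hdiam : G.ediam ≠ ⊤ := connected_iff_ediam_ne_top.mp hG
  rcases H.exists_notMem_verts_or_not_adj_of_ne_top hH with ⟨v, hv⟩ | ⟨a, b, hab, hHab⟩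
  · obtain ⟨p, hp, hlen⟩ := hG.exists_path_of_dist x v
    refine ⟨v, p, hp, by grind [dist_le_diam hdiam (u := x) (v := v)], fun hlift => ?_⟩
    exact hv (hlift.subset_verts p.end_mem_support)
  wlog hab_dist : G.dist x a ≤ G.dist x b generalizing a b
  · exact this b a hab.symm (fun h => hHab h.symm) (by omega)
  obtain ⟨p, hp, hlen⟩ := hG.exists_path_of_dist x a
  have hb : b ∉ p.support := fun hb =>
    (p.dist_lt_of_mem_support hlen hb hab.ne.symm).not_ge hab_dist
  refine ⟨b, p.concat hab, hp.concat hb hab, ?_, fun hlift => hHab ?_⟩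
  · simpa [hlen] using dist_le_diam hdiam (u := x) (v := a)
  · have hchain := hlift.chain
    rw [p.support_concat, List.isChain_append] at hchain
    exact hchain.2.2 a (by simp [List.getLast?_eq_getLast_of_ne_nil, p.getLast_support]) b rfl

/-- If `A` is a connected finite graph of diameter less than `D`, `A'` is a
proper subgraph of `A`, and `u` is a vertex of `A'` maximizing the number of
vertices of the depth-`D` truncated universal cover of `A'`, then the depth-`D`
truncated universal cover of `A` at `u` has strictly more vertices than the
depth-`D` truncated universal cover of `A'` at any of its vertices. -/
theorem stmt_13 {V : Type*} [Fintype V] (A : SimpleGraph V) (hA : A.Connected)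
    (D : ℕ) (hD : A.diam < D)
    (A' : A.Subgraph) (hprop : A' ≠ ⊤) (u : A'.verts)
    (hmax : ∀ w : A'.verts,
      Nat.card (TruncCover A'.coe w D) ≤ Nat.card (TruncCover A'.coe u D)) :
    ∀ w : A'.verts,
      Nat.card (TruncCover A'.coe w D) < Nat.card (TruncCover A (u : V) D) := by
  intro w
  obtain ⟨y, p, hp, hlen, hlift⟩ := hA.exists_path_not_liftsTo hprop u
  have hnew : TruncCover.ofPath p hp (by omega) ∉
      Set.range (TruncCover.map A'.hom Subgraph.hom_injective (x := u) (r := D)) :=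
    fun ⟨s, hs⟩ => hlift ⟨s.1, s.2.1.2.2.1, congr(Subtype.val $hs)⟩
  exact (hmax w).trans_lt
    (Nat.card_lt_of_injective_of_notMem _ (TruncCover.map_injective _ _ _ _) hnew)
end
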